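/- For any integer n ≥ 2, the sum over k from 0 to n of ((-n)_k (n-1)_k (-1/2)_k) / ((1)_k^2 (1/2)_k) equals 4n(n-1)/(2n-1). -/

import Mathlib

/-!
The summand `term n k` is hypergeometric in both `n` and `k`, so Zeilberger's algorithm applies: with
the rational certificate `zeilbergerCert`, the combination `recurrenceSummand n k` telescopes in `k`
for `k ≤ n`. As `term n k` vanishes for `k > n`, summing over `k` gives the first-order recurrence
`(n - 1)(2n + 1) S (n + 1) = (n + 1)(2n - 1) S n` for the sum `S n`, which `4n(n - 1)/(2n - 1)`
satisfies as well; both agree at `n = 2`.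
-/

open Finset

/-- The Pochhammer symbol (rising factorial): (a)_0 = 1, (a)_k = a(a+1)⋯(a+k-1). -/
def poch (a : ℚ) : ℕ → ℚ
  | 0 => 1
  | k + 1 => poch a k * (a + k)

lemma poch_eq_ascPochhammer_eval (a : ℚ) (k : ℕ) : poch a k = (ascPochhammer ℚ k).eval a := by
  induction k with
  | zero => simp [poch]
  | succ k ih => rw [poch, ih, ascPochhammer_succ_eval]

lemma poch_succ (a : ℚ) (k : ℕ) : poch a (k + 1) = poch a k * (a + k) := rfl

lemma poch_succ' (a : ℚ) (k : ℕ) : poch a (k + 1) = a * poch (a + 1) k := by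
  simp [poch_eq_ascPochhammer_eval, ascPochhammer_succ_left]

lemma poch_pos {a : ℚ} (ha : 0 < a) (k : ℕ) : 0 < poch a k := by
  rw [poch_eq_ascPochhammer_eval]
  exact ascPochhammer_pos k a ha

lemma poch_neg_natCast_of_lt {n k : ℕ} (h : n < k) : poch (-(n : ℚ)) k = 0 := by
  rw [poch_eq_ascPochhammer_eval]
  exact ascPochhammer_eval_neg_coe_nat_of_lt h

def term (n k : ℕ) : ℚ :=
  poch (-(n : ℚ)) k * poch ((n : ℚ) - 1) k * poch (-(1/2)) k /
    (poch 1 k ^ 2 * poch (1/2) k)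

lemma term_eq_zero_of_lt {n k : ℕ} (h : n < k) : term n k = 0 := by
  simp [term, poch_neg_natCast_of_lt h]

lemma term_succ_right (n k : ℕ) :
    term n (k + 1) =
      term n k * ((k - n) * (n - 1 + k) * (2 * k - 1)) / ((k + 1) ^ 2 * (2 * k + 1)) := by
  have h₁ : poch 1 k ≠ 0 := (poch_pos one_pos k).ne'
  have h₂ : poch (1/2) k ≠ 0 := (poch_pos (by norm_num) k).ne'
  simp only [term, poch_succ]
  field_simp
  ring

lemma term_succ_left (n k : ℕ) :
    ((n : ℚ) + 1 - k) * (n - 1) * term (n + 1) k = (n + 1) * (n - 1 + k) * term n k := by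
  have hneg := poch_succ' (-((n : ℚ) + 1)) k
  have hpos := poch_succ' ((n : ℚ) - 1) k
  rw [poch_succ, show -((n : ℚ) + 1) + 1 = -n by ring] at hneg
  rw [poch_succ, sub_add_cancel] at hpos
  simp only [term]
  push_cast
  rw [add_sub_cancel_right]
  linear_combination
    -((n - 1) * poch n k * hneg + (n + 1) * poch (-(n : ℚ)) k * hpos) *
      poch (-(1/2)) k / (poch 1 k ^ 2 * poch (1/2) k)

def zeilbergerCert (n k : ℕ) : ℚ :=
  -(2 * (k : ℚ) ^ 2 - 2 * ((n : ℚ) ^ 2 + 2) * k + (n : ℚ) ^ 4 + (n : ℚ) ^ 2 + 2) /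
    ((n : ℚ) ^ 2 * ((n : ℚ) - 1) ^ 2 * ((n : ℚ) + 1) ^ 2)

def recurrenceSummand (n k : ℕ) : ℚ :=
  ((n : ℚ) - 1) * (2 * n + 1) * term (n + 1) k - ((n : ℚ) + 1) * (2 * n - 1) * term n k

def zeilbergerAntidiff (n k : ℕ) : ℚ := (k : ℚ) ^ 2 * zeilbergerCert n k * recurrenceSummand n k

lemma recurrenceSummand_eq_sub {n k : ℕ} (hn : 2 ≤ n) (hk : k ≤ n) :
    recurrenceSummand n k = zeilbergerAntidiff n (k + 1) - zeilbergerAntidiff n k := by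
  have hn' : (2 : ℚ) ≤ n := by exact_mod_cast hn
  have hk' : (k : ℚ) ≤ n := by exact_mod_cast hk
  have h₁ : (n : ℚ) - 1 ≠ 0 := by linarith
  have h₂ : (n : ℚ) + 1 - k ≠ 0 := by linarith
  have hshift : term (n + 1) k = (n + 1) * (n - 1 + k) * term n k / ((n + 1 - k) * (n - 1)) := by
    rw [eq_div_iff (mul_ne_zero h₂ h₁), ← term_succ_left]
    ring
  simp only [zeilbergerAntidiff, recurrenceSummand, zeilbergerCert]
  rw [term_succ_right (n + 1) k, term_succ_right n k, hshift]
  push_cast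
  field_simp
  ring

lemma sum_recurrenceSummand {n : ℕ} (hn : 2 ≤ n) :
    ∑ k ∈ range (n + 2), recurrenceSummand n k = 0 := by
  have htel : ∑ k ∈ range (n + 1), recurrenceSummand n k = zeilbergerAntidiff n (n + 1) := by
    rw [sum_congr rfl fun k hk => recurrenceSummand_eq_sub hn (mem_range_succ_iff.mp hk),
      sum_range_sub]
    simp [zeilbergerAntidiff]
  have hn' : (2 : ℚ) ≤ n := by exact_mod_cast hn
  have hcert : ((n : ℚ) + 1) ^ 2 * zeilbergerCert n (n + 1) = -1 := by
    have h₁ : (n : ℚ) - 1 ≠ 0 := by linarith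
    simp only [zeilbergerCert]
    push_cast
    field_simp
    ring
  rw [sum_range_succ, htel, zeilbergerAntidiff]
  push_cast
  linear_combination recurrenceSummand n (n + 1) * hcert

lemma sum_term_recurrence {n : ℕ} (hn : 2 ≤ n) :
    ((n : ℚ) - 1) * (2 * n + 1) * ∑ k ∈ range (n + 2), term (n + 1) k =
      ((n : ℚ) + 1) * (2 * n - 1) * ∑ k ∈ range (n + 1), term n k := by
  have h := sum_recurrenceSummand hn
  simp only [recurrenceSummand, sum_sub_distrib, ← mul_sum] at h
  rw [sum_range_succ (term n), term_eq_zero_of_lt (Nat.lt_succ_self n)] at h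
  linear_combination h

theorem stmt1 (n : ℕ) (hn : 2 ≤ n) :
    ∑ k ∈ Finset.range (n + 1),
      poch (-(n : ℚ)) k * poch ((n : ℚ) - 1) k * poch (-(1/2)) k /
        (poch 1 k ^ 2 * poch (1/2) k)
    = 4 * (n : ℚ) * ((n : ℚ) - 1) / (2 * (n : ℚ) - 1) := by
  show ∑ k ∈ range (n + 1), term n k = _
  induction n, hn using Nat.le_induction with
  | base => norm_num [sum_range_succ, term, poch]
  | succ n hn ih =>
    have hn' : (2 : ℚ) ≤ n := by exact_mod_cast hn
    have hrec := sum_term_recurrence hn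
    rw [ih, mul_assoc _ (2 * (n : ℚ) - 1), mul_div_cancel₀ _ (by linarith)] at hrec
    rw [eq_div_iff (by push_cast; linarith)]
    push_cast
    apply mul_left_cancel₀ (show (n : ℚ) - 1 ≠ 0 by linarith)
    linear_combination hrec
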